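/- For any polynomial P with complex coefficients and constant term a₀, ‖P‖₀ ≥ |a₀|, where ‖P‖₀ is the areal Mahler measure. -/

import Mathlib

open Polynomial MeasureTheory Filter
section AuxMahler
open Set
open scoped ENNReal NNReal

/-- The areal (Bergman) analog of Mahler's measure:
`‖P‖₀ = exp((1/π) ∬_{|z|<1} log|P(z)| dA(z))`, with the convention that it is `0` for `P = 0`. -/
noncomputable def arealMahler (P : Polynomial ℂ) : ℝ :=
  if P = 0 then 0 else
    Real.exp ((1 / Real.pi) * ∫ z in Metric.ball (0 : ℂ) 1, Real.log (‖P.eval z‖))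

/-- Mahler's measure `M(P) = exp((1/2π) ∫₀^{2π} log|P(e^{iθ})| dθ)`,
with the convention that it is `0` for `P = 0`. -/
noncomputable def mahlerM (P : Polynomial ℂ) : ℝ :=
  if P = 0 then 0 else
    Real.exp ((1 / (2 * Real.pi)) * ∫ θ in (0 : ℝ)..(2 * Real.pi),
      Real.log (‖P.eval (Complex.exp (θ * Complex.I))‖))

local notation "𝔻" => Metric.ball (0 : ℂ) 1

lemma exp_tail_lintegral_ne_top : ∫⁻ t in Set.Ioi (0:ℝ), ENNReal.ofReal (Real.exp (-t)) ≠ ⊤ := by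
  have h := (exp_neg_integrableOn_Ioi 0 (zero_lt_one)).2
  simp only [HasFiniteIntegral] at h
  have : ∀ t : ℝ, ENNReal.ofReal (Real.exp (-t)) = ‖Real.exp (-1 * t)‖ₑ := by
    intro t
    rw [← ofReal_norm, Real.norm_eq_abs, abs_of_pos (Real.exp_pos _), neg_one_mul]
  simp_rw [this]
  exact h.ne

lemma integrableOn_of_tail {f : ℂ → ℝ} {B : ℝ} (hB : 0 ≤ B)
    (hm : AEStronglyMeasurable f (volume.restrict 𝔻))
    (hub : ∀ z ∈ 𝔻, f z ≤ B) (C : ℝ≥0∞) (hC : C ≠ ⊤)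
    (htail : ∀ t : ℝ, 0 < t →
      volume ({z | f z ≤ -t} ∩ 𝔻) ≤ C * ENNReal.ofReal (Real.exp (-t))) :
    IntegrableOn f 𝔻 := by
  refine ⟨hm, ?_⟩
  simp only [HasFiniteIntegral]
  have h1 : ∀ᵐ z ∂(volume.restrict 𝔻),
      ‖f z‖ₑ ≤ ENNReal.ofReal B + ENNReal.ofReal (max (-f z) 0) := by
    filter_upwards [ae_restrict_mem measurableSet_ball] with z hz
    rw [← ofReal_norm, Real.norm_eq_abs, ← ENNReal.ofReal_add hB (le_max_right _ _)]
    apply ENNReal.ofReal_le_ofReal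
    rcases le_or_gt 0 (f z) with h | h
    · rw [abs_of_nonneg h]
      have := hub z hz
      nlinarith [le_max_right (-f z) 0]
    · rw [abs_of_neg h]
      nlinarith [le_max_left (-f z) 0]
  calc ∫⁻ z, ‖f z‖ₑ ∂(volume.restrict 𝔻)
      ≤ ∫⁻ z, (ENNReal.ofReal B + ENNReal.ofReal (max (-f z) 0)) ∂(volume.restrict 𝔻) :=
        lintegral_mono_ae h1
    _ = ENNReal.ofReal B * volume 𝔻 + ∫⁻ z, ENNReal.ofReal (max (-f z) 0) ∂(volume.restrict 𝔻) := by
        rw [lintegral_add_left measurable_const, lintegral_const, Measure.restrict_apply_univ]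
    _ < ⊤ := by
        refine ENNReal.add_lt_top.2 ⟨ENNReal.mul_lt_top ENNReal.ofReal_lt_top
          measure_ball_lt_top, ?_⟩
        have hmeas : AEMeasurable (fun z => max (-f z) 0) (volume.restrict 𝔻) :=
          (hm.aemeasurable.neg).max aemeasurable_const
        have hrw := lintegral_eq_lintegral_meas_le (volume.restrict 𝔻)
          (f := fun z => max (-f z) 0) (ae_of_all _ fun z => le_max_right _ _) hmeas
        rw [hrw]
        have h2 : ∀ t ∈ Set.Ioi (0:ℝ),
            (volume.restrict 𝔻) {a | t ≤ max (-f a) 0} ≤ C * ENNReal.ofReal (Real.exp (-t)) := by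
          intro t ht
          rw [Measure.restrict_apply' measurableSet_ball]
          have hset : {a | t ≤ max (-f a) 0} = {a | f a ≤ -t} := by
            ext a
            simp only [Set.mem_setOf_eq, le_max_iff, or_iff_left (not_le.mpr ht.out), le_neg]
          rw [hset]
          exact htail t ht
        calc ∫⁻ t in Set.Ioi (0:ℝ), (volume.restrict 𝔻) {a | t ≤ max (-f a) 0}
            ≤ ∫⁻ t in Set.Ioi (0:ℝ), C * ENNReal.ofReal (Real.exp (-t)) :=
              setLIntegral_mono' measurableSet_Ioi h2
          _ = C * ∫⁻ t in Set.Ioi (0:ℝ), ENNReal.ofReal (Real.exp (-t)) :=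
              lintegral_const_mul' _ _ hC
          _ < ⊤ := ENNReal.mul_lt_top hC.lt_top exp_tail_lintegral_ne_top.lt_top

lemma integrableOn_log_abs_sub (a : ℂ) :
    IntegrableOn (fun z => Real.log (‖z - a‖)) 𝔻 := by
  apply integrableOn_of_tail (B := 1 + ‖a‖) (C := (NNReal.pi : ℝ≥0∞)) (by positivity)
  · exact (Real.measurable_log.comp
      (continuous_norm.measurable.comp (measurable_id.sub_const a))).aestronglyMeasurable
  · intro z hz
    calc Real.log (‖z - a‖) ≤ ‖z - a‖ :=
          Real.log_le_self (norm_nonneg _)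
      _ ≤ ‖z‖ + ‖a‖ := by
          simpa using norm_sub_le z a
      _ ≤ 1 + ‖a‖ := by
          have : ‖z‖ < 1 := by simpa [Complex.dist_eq] using hz
          linarith
  · exact ENNReal.coe_ne_top
  · intro t ht
    have hsub : {z : ℂ | Real.log (‖z - a‖) ≤ -t} ∩ 𝔻 ⊆
        Metric.closedBall a (Real.exp (-t)) := by
      rintro z ⟨hz, -⟩
      simp only [Set.mem_setOf_eq] at hz
      rw [Metric.mem_closedBall, Complex.dist_eq]
      by_contra hlt
      push_neg at hlt
      have := Real.log_lt_log (Real.exp_pos _) hlt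
      rw [Real.log_exp] at this
      linarith
    calc volume ({z : ℂ | Real.log (‖z - a‖) ≤ -t} ∩ 𝔻)
        ≤ volume (Metric.closedBall a (Real.exp (-t))) := measure_mono hsub
      _ = ENNReal.ofReal (Real.exp (-t)) ^ 2 * NNReal.pi := Complex.volume_closedBall _ _
      _ ≤ (NNReal.pi : ℝ≥0∞) * ENNReal.ofReal (Real.exp (-t)) := by
          rw [pow_two, mul_comm]
          have h1 : ENNReal.ofReal (Real.exp (-t)) ≤ 1 := by
            rw [← ENNReal.ofReal_one]
            exact ENNReal.ofReal_le_ofReal (Real.exp_le_one_iff.2 (by linarith))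
          calc (NNReal.pi : ℝ≥0∞) * (ENNReal.ofReal (Real.exp (-t)) * ENNReal.ofReal (Real.exp (-t)))
              ≤ (NNReal.pi : ℝ≥0∞) * (1 * ENNReal.ofReal (Real.exp (-t))) := by
                gcongr
            _ = (NNReal.pi : ℝ≥0∞) * ENNReal.ofReal (Real.exp (-t)) := by rw [one_mul]

lemma integrableOn_log_abs_abs_sub {b : ℝ} (hb : 0 ≤ b) :
    IntegrableOn (fun z => Real.log |‖z‖ - b|) 𝔻 := by
  apply integrableOn_of_tail (B := 1 + b)
    (C := (NNReal.pi : ℝ≥0∞) * ENNReal.ofReal (4 * (b + 1))) (by positivity)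
  · exact (Real.measurable_log.comp
      ((continuous_norm.measurable.sub_const b).abs)).aestronglyMeasurable
  · intro z hz
    have hz1 : ‖z‖ < 1 := by simpa [Complex.dist_eq] using hz
    calc Real.log |‖z‖ - b| ≤ |‖z‖ - b| := Real.log_le_self (abs_nonneg _)
      _ ≤ 1 + b := by
          rw [abs_sub_le_iff]
          constructor <;> [skip; skip] <;> nlinarith [norm_nonneg z]
  · exact ENNReal.mul_ne_top ENNReal.coe_ne_top ENNReal.ofReal_ne_top
  · intro t ht
    set s := Real.exp (-t) with hs
    have hs0 : 0 < s := Real.exp_pos _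
    have hs1 : s ≤ 1 := Real.exp_le_one_iff.2 (by linarith)
    have hsub : {z : ℂ | Real.log |‖z‖ - b| ≤ -t} ∩ 𝔻 ⊆
        {z : ℂ | |‖z‖ - b| ≤ s} := by
      rintro z ⟨hz, -⟩
      simp only [Set.mem_setOf_eq] at hz ⊢
      by_contra hlt
      push_neg at hlt
      have := Real.log_lt_log hs0 hlt
      rw [hs, Real.log_exp] at this
      linarith
    have key : volume {z : ℂ | |‖z‖ - b| ≤ s} ≤
        (NNReal.pi : ℝ≥0∞) * ENNReal.ofReal (4 * (b + 1)) * ENNReal.ofReal s := by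
      rcases le_or_gt b s with hbs | hbs
      · -- whole set inside closedBall 0 (b+s)
        have h1 : {z : ℂ | |‖z‖ - b| ≤ s} ⊆ Metric.closedBall 0 (b + s) := by
          intro z hz
          simp only [Set.mem_setOf_eq, abs_sub_le_iff] at hz
          rw [Metric.mem_closedBall, Complex.dist_eq, sub_zero]
          linarith [hz.1]
        calc volume {z : ℂ | |‖z‖ - b| ≤ s}
            ≤ volume (Metric.closedBall 0 (b + s)) := measure_mono h1
          _ = ENNReal.ofReal (b + s) ^ 2 * NNReal.pi := Complex.volume_closedBall _ _
          _ ≤ (NNReal.pi : ℝ≥0∞) * ENNReal.ofReal (4 * (b + 1)) * ENNReal.ofReal s := by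
              rw [← ENNReal.ofReal_pow (by positivity), mul_comm _ (NNReal.pi : ℝ≥0∞), mul_assoc,
                ← ENNReal.ofReal_mul (by positivity)]
              gcongr
              nlinarith
      · -- annulus
        have h1 : {z : ℂ | |‖z‖ - b| ≤ s} ⊆
            Metric.closedBall 0 (b + s) \ Metric.ball 0 (b - s) := by
          intro z hz
          simp only [Set.mem_setOf_eq, abs_sub_le_iff] at hz
          constructor
          · rw [Metric.mem_closedBall, Complex.dist_eq, sub_zero]; linarith [hz.1]
          · rw [Metric.mem_ball, Complex.dist_eq, sub_zero, not_lt]; linarith [hz.2]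
        have h2 : volume (Metric.closedBall 0 (b + s) \ Metric.ball (0:ℂ) (b - s)) =
            ENNReal.ofReal ((b + s)^2) * NNReal.pi - ENNReal.ofReal ((b - s)^2) * NNReal.pi := by
          rw [measure_diff (Metric.ball_subset_closedBall.trans
              (Metric.closedBall_subset_closedBall (by linarith)))
              measurableSet_ball.nullMeasurableSet measure_ball_lt_top.ne,
            Complex.volume_closedBall, Complex.volume_ball,
            ← ENNReal.ofReal_pow (by positivity : (0:ℝ) ≤ b + s),
              ← ENNReal.ofReal_pow (by linarith : (0:ℝ) ≤ b - s)]
        calc volume {z : ℂ | |‖z‖ - b| ≤ s}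
            ≤ ENNReal.ofReal ((b + s)^2) * NNReal.pi - ENNReal.ofReal ((b - s)^2) * NNReal.pi := by
              rw [← h2]; exact measure_mono h1
          _ = ENNReal.ofReal ((b + s)^2 - (b - s)^2) * NNReal.pi := by
              rw [← ENNReal.sub_mul (fun _ _ => ENNReal.coe_ne_top),
                ENNReal.ofReal_sub _ (by positivity)]
          _ ≤ (NNReal.pi : ℝ≥0∞) * ENNReal.ofReal (4 * (b + 1)) * ENNReal.ofReal s := by
              rw [mul_comm _ (NNReal.pi : ℝ≥0∞), mul_assoc, ← ENNReal.ofReal_mul (by positivity)]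
              gcongr
              nlinarith
    exact (measure_mono hsub).trans key

lemma setIntegral_rotation_eq {c u : ℂ} (hu : ‖u‖ = 1) :
    ∫ z in 𝔻, Real.log (‖z - u * c‖) = ∫ z in 𝔻, Real.log (‖z - c‖) := by
  have hu' : u ∈ Submonoid.unitSphere ℂ := by
    show u ∈ Metric.sphere (0:ℂ) 1
    simp [Complex.dist_eq, hu]
  set T : ℂ ≃ₗᵢ[ℝ] ℂ := rotation ⟨u, hu'⟩ with hT
  have hmp : MeasurePreserving T volume volume := T.measurePreserving
  have hemb : MeasurableEmbedding T := T.toHomeomorph.measurableEmbedding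
  have hpre : T ⁻¹' 𝔻 = 𝔻 := by
    ext z
    simp only [Set.mem_preimage, Metric.mem_ball, Complex.dist_eq, sub_zero]
    rw [hT]; erw [rotation_apply]
    simp [norm_mul, hu]
  have := hmp.setIntegral_preimage_emb hemb
    (fun y => Real.log (‖y - u * c‖)) 𝔻
  rw [hpre] at this
  rw [← this]
  congr 1
  ext z
  rw [hT]; erw [rotation_apply]
  have : (⟨u, hu'⟩ : Circle) * z - u * c = u * (z - c) := by push_cast; ring
  rw [this, norm_mul, hu, one_mul]

lemma prod_nthRoots_identity {n : ℕ} (hn : 0 < n) {c : ℂ} (hc : c ≠ 0) (z : ℂ) :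
    z ^ n - c ^ n = ∏ μ ∈ Polynomial.nthRootsFinset n (1 : ℂ), (z - μ * c) := by
  have hζ := Complex.isPrimitiveRoot_exp n hn.ne'
  have hpoly := Polynomial.X_pow_sub_one_eq_prod hn hζ
  have heval := congrArg (Polynomial.eval (z / c)) hpoly
  simp only [Polynomial.eval_sub, Polynomial.eval_pow, Polynomial.eval_X, Polynomial.eval_one,
    Polynomial.eval_prod, Polynomial.eval_C] at heval
  have hcard := hζ.card_nthRootsFinset
  calc z ^ n - c ^ n = c ^ n * ((z / c) ^ n - 1) := by
        rw [div_pow, mul_sub, mul_div_cancel₀ _ (pow_ne_zero n hc), mul_one]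
    _ = ∏ μ ∈ Polynomial.nthRootsFinset n (1 : ℂ), (c * (z / c - μ)) := by
        rw [heval, Finset.prod_mul_distrib, Finset.prod_const, hcard]
    _ = ∏ μ ∈ Polynomial.nthRootsFinset n (1 : ℂ), (z - μ * c) := by
        refine Finset.prod_congr rfl fun μ _ => ?_
        field_simp

lemma abs_eq_one_of_mem_nthRoots {n : ℕ} (hn : 0 < n) {μ : ℂ}
    (hμ : μ ∈ Polynomial.nthRootsFinset n (1 : ℂ)) : ‖μ‖ = 1 := by
  have h1 : μ ^ n = 1 := (Polynomial.mem_nthRootsFinset hn _).1 hμ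
  have h2 : ‖μ‖ ^ n = 1 := by
    rw [← norm_pow, h1, norm_one]
  rcases lt_trichotomy (‖μ‖) 1 with h | h | h
  · exact absurd h2 (by nlinarith [pow_lt_one₀ (norm_nonneg μ) h hn.ne'])
  · exact h
  · exact absurd h2 (by nlinarith [one_lt_pow₀ h hn.ne'])

lemma key_single {c : ℂ} (hc : c ≠ 0) :
    Real.pi * Real.log (‖c‖) ≤ ∫ z in 𝔻, Real.log (‖z - c‖) := by
  set b : ℝ := ‖c‖ with hbdef
  have hb0 : 0 < b := norm_pos_iff.2 hc
  set I : ℝ := ∫ z in 𝔻, Real.log (‖z - c‖) with hIdef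
  set K : ℝ := Real.log (max 1 b) with hKdef
  set J : ℝ := ∫ z in 𝔻, Real.log |‖z‖ - b| with hJdef
  have hpi : (volume 𝔻).toReal = Real.pi := by simp [Complex.volume_ball]
  -- integrability of log (max |z| b)
  have hcont_logmax : Continuous fun z : ℂ => Real.log (max (‖z‖) b) :=
    (continuous_norm.max continuous_const).log
      (fun z => ne_of_gt (lt_of_lt_of_le hb0 (le_max_right _ _)))
  have hint_logmax : IntegrableOn (fun z : ℂ => Real.log (max (‖z‖) b)) 𝔻 :=
    (hcont_logmax.continuousOn.integrableOn_compact (isCompact_closedBall (0:ℂ) 1)).mono_set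
      Metric.ball_subset_closedBall
  have hint_J : IntegrableOn (fun z : ℂ => Real.log |‖z‖ - b|) 𝔻 :=
    integrableOn_log_abs_abs_sub hb0.le
  -- ∫ log max ≥ π log b
  have hlogmax_ge : Real.pi * Real.log b ≤ ∫ z in 𝔻, Real.log (max (‖z‖) b) := by
    have := setIntegral_mono_on (f := fun _ : ℂ => Real.log b)
      (g := fun z : ℂ => Real.log (max (‖z‖) b))
      (integrableOn_const measure_ball_lt_top.ne) hint_logmax measurableSet_ball
      (fun z _ => Real.log_le_log hb0 (le_max_right _ _))
    rw [setIntegral_const, Measure.real, hpi, smul_eq_mul] at this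
    nlinarith [this]
  -- main estimate for each n
  have main : ∀ n : ℕ, 0 < n →
      Real.pi * Real.log b + (J - K * Real.pi) / n ≤ I := by
    intro n hn
    -- Step A : n * I = ∫ log |z^n - c^n|
    have hsum_int : ∀ μ ∈ Polynomial.nthRootsFinset n (1 : ℂ),
        IntegrableOn (fun z : ℂ => Real.log (‖z - μ * c‖)) 𝔻 :=
      fun μ _ => integrableOn_log_abs_sub (μ * c)
    have hroot0 : volume {z : ℂ | z ^ n - c ^ n = 0} = 0 := by
      have hfin : {z : ℂ | z ^ n - c ^ n = 0}.Finite := by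
        have : {z : ℂ | z ^ n - c ^ n = 0} = {z : ℂ | (Polynomial.X ^ n -
            Polynomial.C (c ^ n)).IsRoot z} := by
          ext z; simp [Polynomial.IsRoot]
        rw [this]
        exact Polynomial.finite_setOf_isRoot (Polynomial.X_pow_sub_C_ne_zero hn _)
      exact hfin.measure_zero _
    have hae0 : ∀ᵐ z ∂(volume.restrict 𝔻), z ^ n - c ^ n ≠ 0 := by
      refine (ae_restrict_of_ae ?_)
      rw [ae_iff]
      simpa using hroot0
    have haesum : (fun z : ℂ => ∑ μ ∈ Polynomial.nthRootsFinset n (1 : ℂ),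
        Real.log (‖z - μ * c‖))
        =ᶠ[ae (volume.restrict 𝔻)] fun z => Real.log (‖z ^ n - c ^ n‖) := by
      filter_upwards [hae0] with z hz
      have hne : ∀ μ ∈ Polynomial.nthRootsFinset n (1 : ℂ), ‖z - μ * c‖ ≠ 0 := by
        intro μ hμ
        refine norm_ne_zero_iff.2 ?_
        intro h0
        rw [sub_eq_zero] at h0
        apply hz
        rw [h0, mul_pow, (Polynomial.mem_nthRootsFinset hn _).1 hμ, one_mul, sub_self]
      rw [prod_nthRoots_identity hn hc z, norm_prod, Real.log_prod hne]
    have hint_big : IntegrableOn (fun z : ℂ => Real.log (‖z ^ n - c ^ n‖)) 𝔻 :=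
      (integrable_finset_sum _ hsum_int).congr haesum
    have hstepA : (n : ℝ) * I = ∫ z in 𝔻, Real.log (‖z ^ n - c ^ n‖) := by
      rw [← integral_congr_ae haesum, integral_finset_sum _ hsum_int]
      have : ∀ μ ∈ Polynomial.nthRootsFinset n (1 : ℂ),
          (∫ z in 𝔻, Real.log (‖z - μ * c‖)) = I :=
        fun μ hμ => setIntegral_rotation_eq (abs_eq_one_of_mem_nthRoots hn hμ)
      rw [Finset.sum_congr rfl this, Finset.sum_const,
        (Complex.isPrimitiveRoot_exp n hn.ne').card_nthRootsFinset, nsmul_eq_mul]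
    -- Step B : pointwise bound a.e.
    set g : ℂ → ℝ := fun z =>
      (n : ℝ) * Real.log (max (‖z‖) b) + Real.log |‖z‖ - b| - K with hgdef
    have hint_g : IntegrableOn g 𝔻 :=
      ((hint_logmax.const_mul (n : ℝ)).add hint_J).sub
        (integrableOn_const measure_ball_lt_top.ne)
    have hsphere : ∀ᵐ z ∂(volume.restrict 𝔻), ‖z‖ ≠ b := by
      refine ae_restrict_of_ae ?_
      rw [ae_iff]
      have : {z : ℂ | ¬‖z‖ ≠ b} = Metric.sphere (0:ℂ) b := by
        ext z; simp [Complex.dist_eq]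
      rw [this]
      exact Measure.addHaar_sphere volume 0 b
    have haeB : ∀ᵐ z ∂(volume.restrict 𝔻),
        g z ≤ Real.log (‖z ^ n - c ^ n‖) := by
      filter_upwards [hsphere, ae_restrict_mem measurableSet_ball] with z hzb hzD
      have hz1 : ‖z‖ < 1 := by simpa [Complex.dist_eq] using hzD
      set M : ℝ := max (‖z‖) b with hM
      set m : ℝ := min (‖z‖) b with hm
      have hM0 : 0 < M := lt_of_lt_of_le hb0 (le_max_right _ _)
      have hmM : m < M := by
        rcases lt_or_gt_of_ne hzb with h | h
        · rw [hm, hM, min_eq_left h.le, max_eq_right h.le]; exact h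
        · rw [hm, hM, min_eq_right h.le, max_eq_left h.le]; exact h
      have hm0 : 0 ≤ m := le_min (norm_nonneg z) hb0.le
      have hMle : M ≤ max 1 b := max_le_max hz1.le le_rfl
      have hMm : M - m = |‖z‖ - b| := by
        rcases le_total (‖z‖) b with h | h
        · rw [hM, hm, max_eq_right h, min_eq_left h, abs_of_nonpos (by linarith)]; ring
        · rw [hM, hm, max_eq_left h, min_eq_right h, abs_of_nonneg (by linarith)]
      have hlow : M ^ (n-1) * (M - m) ≤ ‖z ^ n - c ^ n‖ := by
        have h1 : |‖z ^ n‖ - ‖c ^ n‖| ≤ ‖z ^ n - c ^ n‖ :=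
          abs_norm_sub_norm_le _ _
        have h2 : |‖z‖ ^ n - b ^ n| = M ^ n - m ^ n := by
          rcases le_total (‖z‖) b with h | h
          · rw [hM, hm, max_eq_right h, min_eq_left h,
              abs_of_nonpos (by nlinarith [pow_le_pow_left₀ (norm_nonneg z) h n])]
            ring
          · rw [hM, hm, max_eq_left h, min_eq_right h,
              abs_of_nonneg (by nlinarith [pow_le_pow_left₀ hb0.le h n])]
        have h3 : M ^ (n-1) * (M - m) ≤ M ^ n - m ^ n := by
          have hmn : m ^ n ≤ M ^ (n-1) * m := by
            calc m ^ n = m ^ (n-1) * m := by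
                  rw [← pow_succ, Nat.sub_add_cancel hn]
              _ ≤ M ^ (n-1) * m := by
                  have := pow_le_pow_left₀ hm0 hmM.le (n-1)
                  nlinarith
          have hMn : M ^ n = M ^ (n-1) * M := by rw [← pow_succ, Nat.sub_add_cancel hn]
          nlinarith
        rw [norm_pow, norm_pow] at h1
        calc M ^ (n-1) * (M - m) ≤ M ^ n - m ^ n := h3
          _ = |‖z‖ ^ n - b ^ n| := h2.symm
          _ ≤ ‖z ^ n - c ^ n‖ := h1
      have hpos : 0 < M ^ (n-1) * (M - m) := mul_pos (pow_pos hM0 _) (by linarith)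
      have hlog : Real.log (M ^ (n-1) * (M - m)) ≤
          Real.log (‖z ^ n - c ^ n‖) := Real.log_le_log hpos hlow
      rw [Real.log_mul (by positivity) (by linarith), Real.log_pow] at hlog
      have hcast : ((n - 1 : ℕ) : ℝ) = (n : ℝ) - 1 := by
        rw [Nat.cast_sub hn, Nat.cast_one]
      rw [hcast] at hlog
      have hKM : Real.log M ≤ K := Real.log_le_log hM0 hMle
      have hMm' : Real.log (M - m) = Real.log |‖z‖ - b| := by rw [hMm]
      show (n : ℝ) * Real.log (max (‖z‖) b) + Real.log |‖z‖ - b| - K ≤ _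
      rw [← hM, ← hMm']
      nlinarith [hlog, hKM]
    -- combine
    have hB : (∫ z in 𝔻, g z) ≤ ∫ z in 𝔻, Real.log (‖z ^ n - c ^ n‖) :=
      integral_mono_ae hint_g hint_big haeB
    have hgval : (∫ z in 𝔻, g z) =
        (n : ℝ) * (∫ z in 𝔻, Real.log (max (‖z‖) b)) + J - K * Real.pi := by
      rw [hgdef]
      rw [integral_sub (f := fun z : ℂ => (n : ℝ) * Real.log (max (‖z‖) b) +
            Real.log |‖z‖ - b|) (g := fun _ : ℂ => K)
          ((hint_logmax.const_mul (n : ℝ)).add hint_J)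
          (integrableOn_const measure_ball_lt_top.ne),
        integral_add (f := fun z : ℂ => (n : ℝ) * Real.log (max (‖z‖) b))
          (g := fun z : ℂ => Real.log |‖z‖ - b|)
          (hint_logmax.const_mul (n : ℝ)) hint_J,
        setIntegral_const, Measure.real, hpi, smul_eq_mul]
      have hmul : ∫ a in 𝔻, (n:ℝ) * Real.log (max (‖a‖) b) =
          (n:ℝ) * ∫ a in 𝔻, Real.log (max (‖a‖) b) := by
        simpa [smul_eq_mul] using integral_smul (μ := volume.restrict 𝔻) ((n:ℝ))
          (fun a : ℂ => Real.log (max (‖a‖) b))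
      rw [hmul, ← hJdef]
      ring
    have hfinal : (n : ℝ) * (Real.pi * Real.log b) + (J - K * Real.pi) ≤ (n : ℝ) * I := by
      rw [hstepA]
      have := hB
      rw [hgval] at this
      nlinarith [hlogmax_ge]
    have hn' : (0:ℝ) < (n:ℝ) := by exact_mod_cast hn
    calc Real.pi * Real.log b + (J - K * Real.pi) / (n:ℝ)
        = ((n:ℝ) * (Real.pi * Real.log b) + (J - K * Real.pi)) / (n:ℝ) := by
          rw [add_div, mul_div_cancel_left₀ _ (ne_of_gt hn')]
      _ ≤ ((n:ℝ) * I) / (n:ℝ) := by gcongr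
      _ = I := mul_div_cancel_left₀ _ (ne_of_gt hn')
  -- take the limit n → ∞
  have htend : Filter.Tendsto (fun n : ℕ => Real.pi * Real.log b + (J - K * Real.pi) / n)
      Filter.atTop (nhds (Real.pi * Real.log b)) := by
    have := tendsto_const_div_atTop_nhds_zero_nat (J - K * Real.pi)
    have h2 := Filter.Tendsto.add (tendsto_const_nhds
      (x := Real.pi * Real.log b) (f := Filter.atTop (α := ℕ))) this
    rw [add_zero] at h2
    exact h2
  exact le_of_tendsto htend (Filter.eventually_atTop.2 ⟨1, fun n hn => main n hn⟩)

lemma vol_ball_toReal : (volume 𝔻).toReal = Real.pi := by simp [Complex.volume_ball]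

lemma key_poly : ∀ n : ℕ, ∀ P : Polynomial ℂ, P.natDegree = n → P ≠ 0 →
    IntegrableOn (fun z => Real.log (‖P.eval z‖)) 𝔻 ∧
    (P.eval 0 ≠ 0 → Real.pi * Real.log (‖P.eval 0‖) ≤
      ∫ z in 𝔻, Real.log (‖P.eval z‖)) := by
  intro n
  induction n using Nat.strong_induction_on with
  | _ n IH =>
    intro P hdeg hP0
    rcases Nat.eq_zero_or_pos n with hn | hn
    · -- constant case
      have hPC := Polynomial.eq_C_of_natDegree_eq_zero (hn ▸ hdeg)
      have hev : ∀ z : ℂ, P.eval z = P.coeff 0 := fun z => by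
        conv_lhs => rw [hPC]
        simp
      constructor
      · simp only [hev]
        exact integrableOn_const measure_ball_lt_top.ne
      · intro _
        simp only [hev]
        rw [setIntegral_const, Measure.real, vol_ball_toReal, smul_eq_mul]
    · -- factor out a root
      have hdegpos : 0 < P.degree := by
        rw [← Polynomial.natDegree_pos_iff_degree_pos, hdeg]
        exact hn
      obtain ⟨c, hc⟩ := Complex.exists_root hdegpos
      obtain ⟨Q, hQ⟩ := Polynomial.dvd_iff_isRoot.2 hc
      have hQ0 : Q ≠ 0 := fun h => hP0 (by rw [hQ, h, mul_zero])
      have hdQ : Q.natDegree < n := by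
        have h := Polynomial.natDegree_mul (Polynomial.X_sub_C_ne_zero c) hQ0
        rw [← hQ, hdeg, Polynomial.natDegree_X_sub_C] at h
        omega
      obtain ⟨hQint, hQineq⟩ := IH _ hdQ Q rfl hQ0
      have heval : ∀ z : ℂ, P.eval z = (z - c) * Q.eval z := fun z => by
        rw [hQ]; simp
      have hroots0 : volume {z : ℂ | P.eval z = 0} = 0 :=
        (Polynomial.finite_setOf_isRoot hP0).measure_zero _
      have hae : (fun z : ℂ => Real.log (‖z - c‖) +
          Real.log (‖Q.eval z‖))
          =ᶠ[ae (volume.restrict 𝔻)] fun z => Real.log (‖P.eval z‖) := by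
        have h0 : ∀ᵐ z ∂(volume.restrict 𝔻), P.eval z ≠ 0 :=
          ae_restrict_of_ae (by rw [ae_iff]; simpa using hroots0)
        filter_upwards [h0] with z hz
        have h1 : z - c ≠ 0 := fun h => hz (by rw [heval z, h, zero_mul])
        have h2 : Q.eval z ≠ 0 := fun h => hz (by rw [heval z, h, mul_zero])
        rw [heval z, norm_mul,
          Real.log_mul (norm_ne_zero_iff.2 h1) (norm_ne_zero_iff.2 h2)]
      have hint : IntegrableOn (fun z => Real.log (‖P.eval z‖)) 𝔻 :=
        ((integrableOn_log_abs_sub c).add hQint).congr hae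
      refine ⟨hint, fun h0 => ?_⟩
      have hc0 : c ≠ 0 := fun h => h0 (by rw [heval 0, h, sub_zero, zero_mul])
      have hQ00 : Q.eval 0 ≠ 0 := fun h => h0 (by rw [heval 0, h, mul_zero])
      have habs0 : ‖0 - c‖ = ‖c‖ := by simp
      have hlog : Real.log (‖P.eval 0‖) =
          Real.log (‖c‖) + Real.log (‖Q.eval 0‖) := by
        rw [heval 0, norm_mul, habs0,
          Real.log_mul (norm_ne_zero_iff.2 hc0) (norm_ne_zero_iff.2 hQ00)]
      calc Real.pi * Real.log (‖P.eval 0‖)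
          = Real.pi * Real.log (‖c‖)
            + Real.pi * Real.log (‖Q.eval 0‖) := by rw [hlog]; ring
        _ ≤ (∫ z in 𝔻, Real.log (‖z - c‖))
            + ∫ z in 𝔻, Real.log (‖Q.eval z‖) :=
            add_le_add (key_single hc0) (hQineq hQ00)
        _ = ∫ z in 𝔻, (Real.log (‖z - c‖)
            + Real.log (‖Q.eval z‖)) :=
            (integral_add (integrableOn_log_abs_sub c) hQint).symm
        _ = ∫ z in 𝔻, Real.log (‖P.eval z‖) := integral_congr_ae hae


end AuxMahler

section Main
local notation "𝔻" => Metric.ball (0 : ℂ) 1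

/-- For any `P ∈ ℂ[z]` with constant term `a₀`, `‖P‖₀ ≥ |a₀|`. -/
theorem stmt5 (P : Polynomial ℂ) :
    ‖P.coeff 0‖ ≤ arealMahler P := by

  rcases eq_or_ne P 0 with rfl | hP
  · simp [arealMahler]
  · rw [arealMahler, if_neg hP]
    rcases eq_or_ne (P.coeff 0) 0 with h | h
    · rw [h, norm_zero]
      exact (Real.exp_pos _).le
    · have h0 : P.eval 0 ≠ 0 := by rwa [← Polynomial.coeff_zero_eq_eval_zero]
      have hkey := (key_poly P.natDegree P rfl hP).2 h0
      rw [Polynomial.coeff_zero_eq_eval_zero]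
      have hle : Real.log (‖P.eval 0‖) ≤
          (1 / Real.pi) * ∫ z in 𝔻, Real.log (‖P.eval z‖) := by
        rw [← mul_le_mul_iff_right₀ Real.pi_pos]
        calc Real.pi * Real.log (‖P.eval 0‖)
            ≤ ∫ z in 𝔻, Real.log (‖P.eval z‖) := hkey
          _ = Real.pi * ((1 / Real.pi) * ∫ z in 𝔻, Real.log (‖P.eval z‖)) := by
              field_simp
      calc ‖P.eval 0‖
          = Real.exp (Real.log (‖P.eval 0‖)) :=
            (Real.exp_log (norm_pos_iff.2 h0)).symm
        _ ≤ Real.exp ((1 / Real.pi) * ∫ z in 𝔻, Real.log (‖P.eval z‖)) :=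
            Real.exp_le_exp.2 hle

end Main
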